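/- arXiv:1211.0183 — 4 statements merged into one kernel-verified Lean document; each statement's English description precedes it below -/
import Mathlib

section
/- Let ρ_i be a density matrix, V a unitary, H_f a Hermitian matrix, β_f > 0, and ρ_f = e^{−β_f H_f}/Z_f the Gibbs state of H_f. Then S(ρ_f) − S(ρ_i) ≥ β_f · tr[(ρ_f − V ρ_i V†) H_f] (Clausius inequality for a DUT+DTT process). -/
/-!
Put `σ = V ρᵢ V†`; conjugation by a unitary commutes with the functional calculus, so
`S(σ) = S(ρᵢ)`. Since `ln ρ_f = -β_f H_f - ln Z_f`, the difference
`S(ρ_f) - S(σ) - β_f tr[(ρ_f - σ) H_f]` is exactly the relative entropy `S(σ‖ρ_f)`, which is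
nonnegative by Klein's inequality.

For Klein's inequality write `ρ = Σ pᵢ |uᵢ⟩⟨uᵢ|`, `σ = Σ qⱼ |wⱼ⟩⟨wⱼ|` and `mᵢⱼ = |⟨uᵢ, wⱼ⟩|² ≥ 0`.
Every trace `tr[f(ρ) g(σ)]` equals `Σ mᵢⱼ f(pᵢ) g(qⱼ)`, so
`tr[ρ ln ρ] - tr[ρ ln σ] - tr ρ + tr σ = Σ mᵢⱼ (pᵢ ln pᵢ - pᵢ ln qⱼ - pᵢ + qⱼ)`,
and each bracket is nonnegative because `x ln x - x ln y ≥ x - y`.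
-/

open Matrix BigOperators ComplexOrder

/-- Apply a real function to a Hermitian matrix via the spectral theorem
(junk value `0` for non-Hermitian input). -/
noncomputable def matFun {n : Type*} [Fintype n] [DecidableEq n]
    (f : ℝ → ℝ) (A : Matrix n n ℂ) : Matrix n n ℂ :=
  if hA : A.IsHermitian then
    (hA.eigenvectorUnitary : Matrix n n ℂ) *
      Matrix.diagonal (fun i => (f (hA.eigenvalues i) : ℂ)) *
      star (hA.eigenvectorUnitary : Matrix n n ℂ)
  else 0

/-- Matrix logarithm of a Hermitian matrix. -/
noncomputable def matLog {n : Type*} [Fintype n] [DecidableEq n]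
    (A : Matrix n n ℂ) : Matrix n n ℂ := matFun Real.log A

/-- Matrix exponential of a Hermitian matrix. -/
noncomputable def matExp {n : Type*} [Fintype n] [DecidableEq n]
    (A : Matrix n n ℂ) : Matrix n n ℂ := matFun Real.exp A

/-- The Gibbs state `e^{-βH}/tr[e^{-βH}]`. -/
noncomputable def gibbs {n : Type*} [Fintype n] [DecidableEq n]
    (β : ℝ) (H : Matrix n n ℂ) : Matrix n n ℂ :=
  (matExp ((-β) • H)).trace⁻¹ • matExp ((-β) • H)

/-- A density matrix: positive semidefinite with unit trace. -/
def IsDensity {n : Type*} [Fintype n] [DecidableEq n] (ρ : Matrix n n ℂ) : Prop :=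
  ρ.PosSemidef ∧ ρ.trace = 1

/-- von Neumann entropy `S(ρ) = -tr[ρ ln ρ]`. -/
noncomputable def vnEntropy {n : Type*} [Fintype n] [DecidableEq n]
    (ρ : Matrix n n ℂ) : ℝ := -((ρ * matLog ρ).trace.re)

/-- Relative entropy `S(ρ‖σ) = tr[ρ ln ρ] - tr[ρ ln σ]`. -/
noncomputable def relEnt {n : Type*} [Fintype n] [DecidableEq n]
    (ρ σ : Matrix n n ℂ) : ℝ :=
  ((ρ * matLog ρ).trace - (ρ * matLog σ).trace).re

section

variable {n : Type*} [Fintype n] [DecidableEq n]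

namespace Matrix

lemma trace_unitary_conj (U : unitaryGroup n ℂ) (A : Matrix n n ℂ) :
    ((U : Matrix n n ℂ) * A * star (U : Matrix n n ℂ)).trace = A.trace := by
  rw [trace_mul_cycle, Unitary.coe_star_mul_self, one_mul]

lemma continuousOn_real_spectrum (f : ℝ → ℝ) (A : Matrix n n ℂ) :
    ContinuousOn f (spectrum ℝ A) :=
  A.finite_real_spectrum.continuousOn f

namespace IsHermitian

variable {A B : Matrix n n ℂ}

lemma trace_cfc (hA : A.IsHermitian) (f : ℝ → ℝ) :
    (cfc f A).trace = ∑ i, (f (hA.eigenvalues i) : ℂ) := by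
  rw [hA.cfc_eq, IsHermitian.cfc, Unitary.conjStarAlgAut_apply, trace_mul_cycle,
    Unitary.coe_star_mul_self, one_mul, trace_diagonal]
  rfl

lemma trace_cfc_mul_cfc (hA : A.IsHermitian) (hB : B.IsHermitian) (f g : ℝ → ℝ) :
    (cfc f A * cfc g B).trace = ((∑ i, ∑ j, f (hA.eigenvalues i) * g (hB.eigenvalues j) *
      Complex.normSq ((star (hA.eigenvectorUnitary : Matrix n n ℂ) *
        (hB.eigenvectorUnitary : Matrix n n ℂ)) i j) : ℝ) : ℂ) := by
  set U : Matrix n n ℂ := (hA.eigenvectorUnitary : Matrix n n ℂ)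
  set W : Matrix n n ℂ := (hB.eigenvectorUnitary : Matrix n n ℂ)
  set Df : Matrix n n ℂ := diagonal (RCLike.ofReal ∘ f ∘ hA.eigenvalues)
  set Dg : Matrix n n ℂ := diagonal (RCLike.ofReal ∘ g ∘ hB.eigenvalues)
  have hcycle : (U * Df * star U * (W * Dg * star W)).trace =
      (Df * (star U * W) * (Dg * star (star U * W))).trace := by
    rw [star_mul, star_star]
    simp only [mul_assoc]
    rw [trace_mul_comm]
    simp only [mul_assoc]
  rw [hA.cfc_eq, hB.cfc_eq, IsHermitian.cfc, IsHermitian.cfc, Unitary.conjStarAlgAut_apply,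
    Unitary.conjStarAlgAut_apply, hcycle]
  generalize star U * W = M
  simp only [Complex.ofReal_sum]
  refine Finset.sum_congr rfl fun i _ => ?_
  rw [diag_apply, mul_apply]
  refine Finset.sum_congr rfl fun j _ => ?_
  simp only [Df, Dg, diagonal_mul, star_apply, Function.comp_apply,
    RCLike.ofReal_eq_complex_ofReal]
  push_cast
  rw [Complex.normSq_eq_conj_mul_self, Complex.star_def]
  ring

end IsHermitian

end Matrix

lemma matFun_eq_cfc (f : ℝ → ℝ) (A : Matrix n n ℂ) : matFun f A = cfc f A := by
  by_cases hA : A.IsHermitian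
  · rw [hA.cfc_eq, IsHermitian.cfc, Unitary.conjStarAlgAut_apply, matFun, dif_pos hA]
    rfl
  · rw [matFun, dif_neg hA]
    exact (cfc_apply_of_not_predicate A hA).symm

lemma vnEntropy_unitary_conj (U : unitaryGroup n ℂ) {ρ : Matrix n n ℂ} (hρ : ρ.IsHermitian) :
    vnEntropy ((U : Matrix n n ℂ) * ρ * star (U : Matrix n n ℂ)) = vnEntropy ρ := by
  have hlog := (Unitary.conjStarAlgAut ℂ (Matrix n n ℂ) U).toStarAlgHom.map_cfc Real.log ρ
    (continuousOn_real_spectrum _ _) (LinearMap.continuous_of_finiteDimensional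
      (Unitary.conjStarAlgAut ℂ (Matrix n n ℂ) U).toAlgEquiv.toLinearMap) hρ.isSelfAdjoint
  simp only [StarAlgEquiv.toStarAlgHom_apply, Unitary.conjStarAlgAut_apply] at hlog
  have hconj : (U : Matrix n n ℂ) * ρ * star (U : Matrix n n ℂ) *
      ((U : Matrix n n ℂ) * cfc Real.log ρ * star (U : Matrix n n ℂ)) =
      (U : Matrix n n ℂ) * (ρ * cfc Real.log ρ) * star (U : Matrix n n ℂ) := by
    simp only [mul_assoc, Unitary.coe_star_mul_self, ← mul_assoc (star (U : Matrix n n ℂ)),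
      one_mul]
  rw [vnEntropy, vnEntropy, matLog, matLog, matFun_eq_cfc, matFun_eq_cfc, ← hlog, hconj,
    trace_unitary_conj]

lemma Real.sub_le_mul_log_sub_mul_log {x y : ℝ} (hx : 0 ≤ x) (hy : 0 < y) :
    x - y ≤ x * Real.log x - x * Real.log y := by
  rcases hx.eq_or_lt with rfl | hx
  · simpa using hy.le
  have h := mul_le_mul_of_nonneg_left (Real.log_le_sub_one_of_pos (div_pos hy hx)) hx.le
  rw [Real.log_div hy.ne' hx.ne', mul_sub, mul_sub, mul_one, mul_div_cancel₀ y hx.ne'] at h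
  linarith

theorem re_trace_sub_le_relEnt {ρ σ : Matrix n n ℂ} (hρ : ρ.PosSemidef) (hσ : σ.PosDef) :
    (ρ.trace - σ.trace).re ≤ relEnt ρ σ := by
  have hρ' : IsSelfAdjoint ρ := hρ.1
  have hσ' : IsSelfAdjoint σ := hσ.1
  have hcont := continuousOn_real_spectrum (n := n)
  -- padding with `cfc 1 _ = 1` puts all four traces in the form of `trace_cfc_mul_cfc`
  have h_ρlogρ : ρ * matLog ρ = cfc (fun x => x * Real.log x) ρ * cfc (1 : ℝ → ℝ) σ := by
    rw [cfc_one ℝ σ, mul_one, cfc_mul (fun x : ℝ => x) Real.log ρ (hcont _ _) (hcont _ _),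
      cfc_id' ℝ ρ, matLog, matFun_eq_cfc]
  have h_ρlogσ : ρ * matLog σ = cfc (fun x : ℝ => x) ρ * cfc Real.log σ := by
    rw [cfc_id' ℝ ρ, matLog, matFun_eq_cfc]
  have h_ρ : ρ = cfc (fun x : ℝ => x) ρ * cfc (1 : ℝ → ℝ) σ := by
    rw [cfc_id' ℝ ρ, cfc_one ℝ σ, mul_one]
  have h_σ : σ = cfc (1 : ℝ → ℝ) ρ * cfc (fun x : ℝ => x) σ := by
    rw [cfc_id' ℝ σ, cfc_one ℝ ρ, one_mul]
  rw [relEnt, h_ρlogρ, h_ρlogσ]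
  nth_rewrite 1 [h_ρ]
  nth_rewrite 2 [h_σ]
  simp only [hρ.1.trace_cfc_mul_cfc hσ.1, ← Complex.ofReal_sub, Complex.ofReal_re,
    ← Finset.sum_sub_distrib]
  refine Finset.sum_le_sum fun i _ => Finset.sum_le_sum fun j _ => ?_
  simp only [Pi.one_apply, ← sub_mul, mul_one, one_mul]
  exact mul_le_mul_of_nonneg_right
    (Real.sub_le_mul_log_sub_mul_log (hρ.eigenvalues_nonneg i) (hσ.eigenvalues_pos j))
    (Complex.normSq_nonneg _)

lemma trace_matExp {A : Matrix n n ℂ} (hA : A.IsHermitian) :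
    (matExp A).trace = ((∑ i, Real.exp (hA.eigenvalues i) : ℝ) : ℂ) := by
  rw [matExp, matFun_eq_cfc, hA.trace_cfc, Complex.ofReal_sum]

noncomputable def partitionFunction (β : ℝ) (H : Matrix n n ℂ) : ℝ :=
  (matExp ((-β) • H)).trace.re

section Gibbs

variable {H : Matrix n n ℂ} (hH : H.IsHermitian) (β : ℝ)
include hH

lemma partitionFunction_eq_sum :
    partitionFunction β H = ∑ i, Real.exp ((hH.smul (.all (-β))).eigenvalues i) := by
  rw [partitionFunction, trace_matExp, Complex.ofReal_re]

lemma partitionFunction_pos [Nonempty n] : 0 < partitionFunction β H := by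
  rw [partitionFunction_eq_sum hH]
  exact Finset.sum_pos (fun i _ => Real.exp_pos _) Finset.univ_nonempty

lemma gibbs_eq_cfc :
    gibbs β H = cfc (fun x => (partitionFunction β H)⁻¹ * Real.exp x) ((-β) • H) := by
  rw [gibbs, trace_matExp (hH.smul (.all (-β))), ← partitionFunction_eq_sum hH,
    cfc_const_mul _ _ _ (continuousOn_real_spectrum _ _), matExp, matFun_eq_cfc,
    ← Complex.ofReal_inv, Complex.coe_smul]

lemma trace_gibbs [Nonempty n] : (gibbs β H).trace = 1 := by
  rw [gibbs_eq_cfc hH, (hH.smul (.all (-β))).trace_cfc, ← Complex.ofReal_sum, ← Finset.mul_sum,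
    ← partitionFunction_eq_sum hH, inv_mul_cancel₀ (partitionFunction_pos hH β).ne',
    Complex.ofReal_one]

lemma gibbs_posDef [Nonempty n] : (gibbs β H).PosDef := by
  open scoped MatrixOrder in
  rw [gibbs_eq_cfc hH]
  refine isStrictlyPositive_iff_posDef.1 ((cfc_isStrictlyPositive_iff _ _
    (continuousOn_real_spectrum _ _) (hH.smul (.all (-β)))).2 fun x _ => ?_)
  exact mul_pos (inv_pos.2 (partitionFunction_pos hH β)) (Real.exp_pos x)

lemma matLog_gibbs [Nonempty n] :
    matLog (gibbs β H) =
      (-β) • H - algebraMap ℝ (Matrix n n ℂ) (Real.log (partitionFunction β H)) := by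
  have hlog : (fun x => Real.log ((partitionFunction β H)⁻¹ * Real.exp x)) =
      fun x => x + -Real.log (partitionFunction β H) := by
    ext x
    rw [Real.log_mul (inv_ne_zero (partitionFunction_pos hH β).ne') (Real.exp_ne_zero x),
      Real.log_inv, Real.log_exp, add_comm]
  rw [matLog, matFun_eq_cfc, gibbs_eq_cfc hH]
  refine (cfc_comp' _ _ _ ((((-β) • H).finite_real_spectrum.image _).continuousOn _)
    (continuousOn_real_spectrum _ _) (hH.smul (.all (-β)))).symm.trans ?_
  rw [hlog, cfc_add_const _ _ _ (continuousOn_real_spectrum _ _) (hH.smul (.all (-β))),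
    cfc_id' ℝ _ (hH.smul (.all (-β))), map_neg, ← sub_eq_add_neg]

lemma trace_mul_matLog_gibbs [Nonempty n] (ρ : Matrix n n ℂ) :
    (ρ * matLog (gibbs β H)).trace =
      -β * (ρ * H).trace - Real.log (partitionFunction β H) * ρ.trace := by
  rw [matLog_gibbs hH, mul_sub, Algebra.algebraMap_eq_smul_one, Matrix.mul_smul,
    Matrix.mul_smul, mul_one, trace_sub, trace_smul, trace_smul, Complex.real_smul,
    Complex.real_smul, Complex.ofReal_neg]

lemma relEnt_gibbs [Nonempty n] {σ : Matrix n n ℂ} (hσ : σ.trace = 1) :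
    relEnt σ (gibbs β H) =
      vnEntropy (gibbs β H) - vnEntropy σ - β * ((gibbs β H - σ) * H).trace.re := by
  simp only [relEnt, vnEntropy, trace_mul_matLog_gibbs hH, trace_gibbs hH, hσ, sub_mul, trace_sub,
    Complex.sub_re, Complex.mul_re, Complex.ofReal_re, Complex.ofReal_im, Complex.one_re,
    Complex.one_im, Complex.neg_re, Complex.neg_im]
  ring

end Gibbs

end

theorem clausius_DUT_DTT_general {n : Type*} [Fintype n] [DecidableEq n]
    (ρi : Matrix n n ℂ) (hi : IsDensity ρi) (V : Matrix.unitaryGroup n ℂ)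
    (Hf : Matrix n n ℂ) (hHf : Hf.IsHermitian) (βf : ℝ)
    (ρf : Matrix n n ℂ) (hf : ρf = gibbs βf Hf) :
    vnEntropy ρf - vnEntropy ρi ≥
      βf * (((ρf - (V : Matrix n n ℂ) * ρi * star (V : Matrix n n ℂ)) * Hf).trace.re) := by
  obtain ⟨hpsd, htr⟩ := hi
  have : Nonempty n := by
    by_contra! hn
    simp [Matrix.trace] at htr
  set σ := (V : Matrix n n ℂ) * ρi * star (V : Matrix n n ℂ)
  have hσ : σ.PosSemidef := hpsd.mul_mul_conjTranspose_same _
  have hσtr : σ.trace = 1 := by rw [trace_unitary_conj, htr]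
  have hklein := re_trace_sub_le_relEnt hσ (gibbs_posDef hHf βf)
  rw [hσtr, trace_gibbs hHf, sub_self, Complex.zero_re, relEnt_gibbs hHf βf hσtr] at hklein
  rw [← vnEntropy_unitary_conj V hpsd.1, hf]
  linarith

/-- Clausius inequality for a DUT+DTT process. -/
theorem clausius_DUT_DTT {n : Type*} [Fintype n] [DecidableEq n]
    (ρi : Matrix n n ℂ) (hi : IsDensity ρi) (V : Matrix.unitaryGroup n ℂ)
    (Hf : Matrix n n ℂ) (hHf : Hf.IsHermitian) (βf : ℝ) (hβf : 0 < βf)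
    (ρf : Matrix n n ℂ) (hf : ρf = gibbs βf Hf) :
    vnEntropy ρf - vnEntropy ρi ≥
      βf * (((ρf - (V : Matrix n n ℂ) * ρi * star (V : Matrix n n ℂ)) * Hf).trace.re) :=
  clausius_DUT_DTT_general ρi hi V Hf hHf βf ρf hf
end

section
/- For Gibbs configurations (ρ_i, H_i) at β_i and (ρ_f, H_f) at β_f on an N-dimensional Hilbert space, the minimum over unitaries V of the heat tr[(ρ_f − V ρ_i V†) H_f] equals Σ_k H_f(k)·(e^{−β_f H_f(k)}/Z_f − e^{−β_i H_i(N−k+1)}/Z_i), with eigenvalues ordered decreasingly. -/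
open Matrix BigOperators ComplexOrder

/-!
Diagonalize both Hamiltonians in decreasingly sorted eigenbases, `Hi = P diag(αi) P†` and
`Hf = Q diag(αf) Q†`, so that `ρi = P diag(pi) P†` and `ρf = Q diag(pf) Q†` with
`pi k = e^{-βi αi k}/Zi` increasing in `k`. For a unitary `V` put `T = Q† V P`; then
`tr[V ρi V† Hf] = Σ_{k,j} |T k j|² αf k pi j`, and the matrix `(|T k j|²)` is doubly stochastic.
By Birkhoff's theorem this linear function of it is maximal at a permutation matrix, and by the
rearrangement inequality at the permutation pairing the decreasing `αf` with the decreasing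
`pi ∘ rev`. The unitary `V = Q R P†`, with `R` the reversal permutation, attains the bound.
-/

section Unitary

variable {n α : Type*} [Fintype n] [DecidableEq n] [CommRing α] [StarRing α]

theorem Matrix.submatrix_id_mem_unitaryGroup {U : Matrix n n α} (hU : U ∈ unitaryGroup n α)
    (e : n ≃ n) : U.submatrix id e ∈ unitaryGroup n α := by
  rw [mem_unitaryGroup_iff, star_eq_conjTranspose, conjTranspose_submatrix,
    submatrix_mul_equiv, ← star_eq_conjTranspose, mem_unitaryGroup_iff.mp hU, submatrix_id_id]

theorem Matrix.submatrix_id_mul_diagonal_mul_star (U : Matrix n n α) (e : n ≃ n) (d : n → α) :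
    U.submatrix id e * diagonal (d ∘ e) * star (U.submatrix id e) = U * diagonal d * star U := by
  rw [← submatrix_diagonal_equiv, submatrix_mul_equiv, star_eq_conjTranspose,
    conjTranspose_submatrix, submatrix_mul_equiv, submatrix_id_id, star_eq_conjTranspose]

theorem Matrix.trace_conj_diagonal {U : Matrix n n α} (hU : U ∈ unitaryGroup n α) (d : n → α) :
    (U * diagonal d * star U).trace = ∑ i, d i := by
  rw [trace_mul_cycle, Unitary.star_mul_self_of_mem hU, Matrix.one_mul, trace_diagonal]

end Unitary

section ConjDiagonal

variable {n : Type*} [Fintype n] [DecidableEq n]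

theorem Matrix.IsHermitian.exists_eq_conj_diagonal {H : Matrix n n ℂ} (hH : H.IsHermitian)
    {a : n → ℝ} (e : n ≃ n) (ha : ∀ k, a k = hH.eigenvalues (e k)) :
    ∃ P ∈ unitaryGroup n ℂ, H = P * diagonal (fun k => (a k : ℂ)) * star P := by
  refine ⟨(hH.eigenvectorUnitary : Matrix n n ℂ).submatrix id e,
    submatrix_id_mem_unitaryGroup hH.eigenvectorUnitary.2 e, ?_⟩
  have ha' : (fun k => (a k : ℂ)) = (RCLike.ofReal ∘ hH.eigenvalues) ∘ e := by
    funext k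
    simp [ha]
  rw [ha', submatrix_id_mul_diagonal_mul_star]
  exact hH.spectral_theorem

theorem Matrix.isHermitian_conj_diagonal (U : Matrix n n ℂ) (d : n → ℝ) :
    (U * diagonal (fun i => (d i : ℂ)) * star U).IsHermitian :=
  isHermitian_mul_mul_conjTranspose U
    (isHermitian_diagonal_of_self_adjoint _ (funext fun i => Complex.conj_ofReal (d i)))

theorem Matrix.smul_conj_diagonal (c : ℝ) (U : Matrix n n ℂ) (d : n → ℝ) :
    c • (U * diagonal (fun i => (d i : ℂ)) * star U)
      = U * diagonal (fun i => ((c * d i : ℝ) : ℂ)) * star U := by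
  have hd : (fun i => ((c * d i : ℝ) : ℂ)) = c • fun i => (d i : ℂ) := by
    funext i
    simp [Complex.real_smul]
  rw [hd, diagonal_smul, Matrix.mul_smul, Matrix.smul_mul]

theorem Matrix.conj_diagonal_mul_conj_diagonal {U : Matrix n n ℂ} (hU : U ∈ unitaryGroup n ℂ)
    (x y : n → ℝ) :
    U * diagonal (fun i => (x i : ℂ)) * star U * (U * diagonal (fun i => (y i : ℂ)) * star U)
      = U * diagonal (fun i => ((x i * y i : ℝ) : ℂ)) * star U := by
  calc _ = U * diagonal (fun i => (x i : ℂ)) * (star U * U) * diagonal (fun i => (y i : ℂ))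
        * star U := by simp only [Matrix.mul_assoc]
    _ = _ := by
      rw [Unitary.star_mul_self_of_mem hU, Matrix.mul_one, Matrix.mul_assoc U,
        diagonal_mul_diagonal]
      simp only [Complex.ofReal_mul]

theorem Matrix.trace_conj_diagonal_mul_conj_diagonal {U : Matrix n n ℂ}
    (hU : U ∈ unitaryGroup n ℂ) (x y : n → ℝ) :
    (U * diagonal (fun i => (x i : ℂ)) * star U
      * (U * diagonal (fun i => (y i : ℂ)) * star U)).trace = ((∑ i, x i * y i : ℝ) : ℂ) := by
  rw [conj_diagonal_mul_conj_diagonal hU, trace_conj_diagonal hU, Complex.ofReal_sum]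

theorem Matrix.submatrix_mul_star_conj_diagonal {P : Matrix n n ℂ} (hP : P ∈ unitaryGroup n ℂ)
    (Q : Matrix n n ℂ) (σ : Equiv.Perm n) (p : n → ℝ) :
    Q.submatrix id σ.symm * star P * (P * diagonal (fun k => (p k : ℂ)) * star P)
        * star (Q.submatrix id σ.symm * star P)
      = Q * diagonal (fun k => (p (σ k) : ℂ)) * star Q :=
  calc _ = Q.submatrix id σ.symm * (star P * P) * diagonal (fun k => (p k : ℂ))
          * (star P * P) * star (Q.submatrix id σ.symm) := by
        simp only [star_mul, star_star, Matrix.mul_assoc]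
    _ = Q.submatrix id σ.symm * diagonal ((fun k => (p (σ k) : ℂ)) ∘ σ.symm)
          * star (Q.submatrix id σ.symm) := by
        rw [Unitary.star_mul_self_of_mem hP, Matrix.mul_one, Matrix.mul_one]
        simp only [Function.comp_def, Equiv.apply_symm_apply]
    _ = _ := submatrix_id_mul_diagonal_mul_star _ _ _

end ConjDiagonal

section FunctionalCalculus

variable {n : Type*} [Fintype n] [DecidableEq n]

theorem Matrix.diagonal_comp_mul_eq_mul_diagonal_comp {μ d : n → ℝ} {S : Matrix n n ℂ}
    (h : diagonal (fun i => (μ i : ℂ)) * S = S * diagonal (fun j => (d j : ℂ))) (f : ℝ → ℝ) :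
    diagonal (fun i => (f (μ i) : ℂ)) * S = S * diagonal (fun j => (f (d j) : ℂ)) := by
  ext i j
  have hij := congr_fun₂ h i j
  rw [diagonal_mul, mul_diagonal] at hij ⊢
  -- entrywise `(μ i - d j) * S i j = 0`, so `S i j ≠ 0` forces `μ i = d j`
  by_cases hS : S i j = 0
  · simp [hS]
  · have hμd : μ i = d j := by exact_mod_cast mul_right_cancel₀ hS (hij.trans (mul_comm _ _))
    rw [hμd, mul_comm]

theorem matFun_conj_diagonal (f : ℝ → ℝ) {U : Matrix n n ℂ} (hU : U ∈ unitaryGroup n ℂ)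
    (d : n → ℝ) :
    matFun f (U * diagonal (fun i => (d i : ℂ)) * star U)
      = U * diagonal (fun i => (f (d i) : ℂ)) * star U := by
  have hA := isHermitian_conj_diagonal U d
  set W : Matrix n n ℂ := ↑hA.eigenvectorUnitary
  set μ := hA.eigenvalues
  have hW : W ∈ unitaryGroup n ℂ := hA.eigenvectorUnitary.2
  have hspec : U * diagonal (fun i => (d i : ℂ)) * star U
      = W * diagonal (fun i => (μ i : ℂ)) * star W := hA.spectral_theorem
  set S := star W * U
  have hWS : W * S = U := by
    rw [← Matrix.mul_assoc, Unitary.mul_star_self_of_mem hW, Matrix.one_mul]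
  have hS : S * star S = 1 :=
    Unitary.mul_star_self_of_mem (Submonoid.mul_mem _ (Unitary.star_mem hW) hU)
  have hSd : diagonal (fun i => (μ i : ℂ)) * S = S * diagonal (fun j => (d j : ℂ)) :=
    calc diagonal (fun i => (μ i : ℂ)) * (star W * U)
        = star W * (W * diagonal (fun i => (μ i : ℂ)) * star W) * U := by
          simp only [← Matrix.mul_assoc, Unitary.star_mul_self_of_mem hW, Matrix.one_mul]
      _ = star W * U * diagonal (fun j => (d j : ℂ)) * (star U * U) := by
          rw [← hspec]
          simp only [Matrix.mul_assoc]
      _ = S * diagonal (fun j => (d j : ℂ)) := by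
          rw [Unitary.star_mul_self_of_mem hU, Matrix.mul_one]
  clear_value S
  rw [matFun, dif_pos hA]
  calc W * diagonal (fun i => (f (μ i) : ℂ)) * star W
      = W * (diagonal (fun i => (f (μ i) : ℂ)) * S) * star S * star W := by
        simp only [Matrix.mul_assoc, hS, Matrix.mul_one]
    _ = W * S * diagonal (fun i => (f (d i) : ℂ)) * star (W * S) := by
        rw [diagonal_comp_mul_eq_mul_diagonal_comp hSd, star_mul]
        simp only [Matrix.mul_assoc]
    _ = U * diagonal (fun i => (f (d i) : ℂ)) * star U := by rw [hWS]

theorem gibbs_conj_diagonal (β : ℝ) {U : Matrix n n ℂ} (hU : U ∈ unitaryGroup n ℂ) (a : n → ℝ) :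
    gibbs β (U * diagonal (fun i => (a i : ℂ)) * star U)
      = U * diagonal (fun i => ((Real.exp (-β * a i) / ∑ j, Real.exp (-β * a j) : ℝ) : ℂ))
          * star U := by
  have hexp : matExp ((-β) • (U * diagonal (fun i => (a i : ℂ)) * star U))
      = U * diagonal (fun i => (Real.exp (-β * a i) : ℂ)) * star U := by
    rw [matExp, smul_conj_diagonal, matFun_conj_diagonal _ hU]
  have htr : (matExp ((-β) • (U * diagonal (fun i => (a i : ℂ)) * star U))).trace
      = ((∑ j, Real.exp (-β * a j) : ℝ) : ℂ) := by
    rw [hexp, trace_conj_diagonal hU, Complex.ofReal_sum]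
  rw [gibbs, htr, hexp, ← Complex.ofReal_inv, Complex.coe_smul, smul_conj_diagonal]
  simp only [inv_mul_eq_div]

end FunctionalCalculus

section DoublyStochastic

variable {n : Type*} [Fintype n] [DecidableEq n]

theorem dotProduct_mulVec_le_of_mem_doublyStochastic {a b : n → ℝ} (σ : Equiv.Perm n)
    (hab : Monovary a (b ∘ σ)) {D : Matrix n n ℝ} (hD : D ∈ doublyStochastic ℝ n) :
    a ⬝ᵥ (D *ᵥ b) ≤ ∑ i, a i * b (σ i) := by
  let f : Matrix n n ℝ →ₗ[ℝ] ℝ :=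
    { toFun := fun M => a ⬝ᵥ (M *ᵥ b)
      map_add' := fun M M' => by simp only [add_mulVec, dotProduct_add]
      map_smul' := fun c M => by simp only [smul_mulVec, dotProduct_smul, RingHom.id_apply] }
  rw [← SetLike.mem_coe, doublyStochastic_eq_convexHull_permMatrix] at hD
  obtain ⟨_, ⟨τ, rfl⟩, hτ⟩ :=
    (f.convexOn convex_univ).exists_ge_of_mem_convexHull (Set.subset_univ _) hD
  refine hτ.trans ?_
  simpa [f, permMatrix_mulVec, dotProduct] using
    hab.sum_mul_comp_perm_le_sum_mul (σ := σ⁻¹ * τ)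

theorem Matrix.map_normSq_mem_doublyStochastic {T : Matrix n n ℂ}
    (hT : T ∈ unitaryGroup n ℂ) : T.map Complex.normSq ∈ doublyStochastic ℝ n := by
  have h_row (i : n) : ∑ j, Complex.normSq (T i j) = 1 := by
    have hii := congr_fun₂ (mem_unitaryGroup_iff.mp hT) i i
    simp only [mul_apply, star_apply, RCLike.star_def, Complex.mul_conj, one_apply_eq] at hii
    exact_mod_cast hii
  have h_col (j : n) : ∑ i, Complex.normSq (T i j) = 1 := by
    have hjj := congr_fun₂ (mem_unitaryGroup_iff'.mp hT) j j
    simp only [mul_apply, star_apply, RCLike.star_def, mul_comm (starRingEnd ℂ _),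
      Complex.mul_conj, one_apply_eq] at hjj
    exact_mod_cast hjj
  exact mem_doublyStochastic_iff_sum.mpr ⟨fun i j => Complex.normSq_nonneg _, h_row, h_col⟩

theorem Matrix.trace_conj_diagonal_mul_diagonal (T : Matrix n n ℂ) (a b : n → ℝ) :
    (T * diagonal (fun j => (b j : ℂ)) * star T * diagonal (fun i => (a i : ℂ))).trace
      = (a ⬝ᵥ (T.map Complex.normSq *ᵥ b) : ℝ) := by
  rw [trace]
  simp only [diag_apply, mul_diagonal]
  simp only [mul_apply, diagonal_apply, mul_ite, mul_zero, Finset.sum_ite_eq', Finset.mem_univ,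
    if_true, star_apply, RCLike.star_def, dotProduct, mulVec, map_apply, Complex.ofReal_sum,
    Complex.ofReal_mul, Finset.sum_mul, Finset.mul_sum, Complex.normSq_eq_conj_mul_self]
  refine Finset.sum_congr rfl fun i _ => Finset.sum_congr rfl fun j _ => ?_
  ring

theorem Matrix.re_trace_conj_diagonal_mul_diagonal_le {T : Matrix n n ℂ}
    (hT : T ∈ unitaryGroup n ℂ) {a b : n → ℝ} (σ : Equiv.Perm n) (hab : Monovary a (b ∘ σ)) :
    (T * diagonal (fun j => (b j : ℂ)) * star T * diagonal (fun i => (a i : ℂ))).trace.re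
      ≤ ∑ i, a i * b (σ i) := by
  rw [trace_conj_diagonal_mul_diagonal, Complex.ofReal_re]
  exact dotProduct_mulVec_le_of_mem_doublyStochastic σ hab (map_normSq_mem_doublyStochastic hT)

end DoublyStochastic

theorem isLeast_re_trace_sub_conj_mul {n : Type*} [Fintype n] [DecidableEq n]
    {P Q : Matrix n n ℂ} (hP : P ∈ unitaryGroup n ℂ) (hQ : Q ∈ unitaryGroup n ℂ)
    (p q a : n → ℝ) (σ : Equiv.Perm n) (hσ : Monovary a (p ∘ σ)) :
    IsLeast {x : ℝ | ∃ V ∈ unitaryGroup n ℂ,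
        x = ((Q * diagonal (fun k => (q k : ℂ)) * star Q
          - V * (P * diagonal (fun k => (p k : ℂ)) * star P) * star V)
          * (Q * diagonal (fun k => (a k : ℂ)) * star Q)).trace.re}
      (∑ k, a k * (q k - p (σ k))) := by
  set ρ := P * diagonal (fun k => (p k : ℂ)) * star P
  set H := Q * diagonal (fun k => (a k : ℂ)) * star Q
  have heat (V : Matrix n n ℂ) :
      ((Q * diagonal (fun k => (q k : ℂ)) * star Q - V * ρ * star V) * H).trace.re
        = ∑ k, q k * a k - (H * (V * ρ * star V)).trace.re := by
    rw [Matrix.sub_mul, trace_sub, Complex.sub_re, trace_conj_diagonal_mul_conj_diagonal hQ,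
      Complex.ofReal_re, trace_mul_comm H]
  have hsum : ∑ k, a k * (q k - p (σ k)) = ∑ k, q k * a k - ∑ k, a k * p (σ k) := by
    rw [← Finset.sum_sub_distrib]
    exact Finset.sum_congr rfl fun k _ => by ring
  refine ⟨⟨Q.submatrix id σ.symm * star P,
    Submonoid.mul_mem _ (submatrix_id_mem_unitaryGroup hQ _) (Unitary.star_mem hP), ?_⟩, ?_⟩
  · rw [heat, submatrix_mul_star_conj_diagonal hP, trace_conj_diagonal_mul_conj_diagonal hQ,
      Complex.ofReal_re, hsum]
  · rintro _ ⟨V, hV, rfl⟩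
    set T := star Q * V * P
    have hT : T ∈ unitaryGroup n ℂ :=
      Submonoid.mul_mem _ (Submonoid.mul_mem _ (Unitary.star_mem hQ) hV) hP
    have hVT : (H * (V * ρ * star V)).trace
        = (T * diagonal (fun k => (p k : ℂ)) * star T * diagonal (fun k => (a k : ℂ))).trace := by
      rw [trace_mul_comm _ (diagonal _)]
      simp only [H, Matrix.mul_assoc]
      rw [trace_mul_comm Q]
      simp only [T, ρ, star_mul, star_star, Matrix.mul_assoc]
    rw [heat, hsum, hVT]
    exact sub_le_sub_left (re_trace_conj_diagonal_mul_diagonal_le hT σ hσ) _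

theorem min_heat_DUT_DTT_general {N : ℕ}
    (Hi Hf : Matrix (Fin N) (Fin N) ℂ) (hHi : Hi.IsHermitian) (hHf : Hf.IsHermitian)
    (βi βf : ℝ) (hβi : 0 < βi)
    (αi αf : Fin N → ℝ) (hαi : Antitone αi) (hαf : Antitone αf)
    (hαie : ∃ e : Equiv.Perm (Fin N), ∀ k, αi k = hHi.eigenvalues (e k))
    (hαfe : ∃ e : Equiv.Perm (Fin N), ∀ k, αf k = hHf.eigenvalues (e k))
    (Zi Zf : ℝ) (hZi : Zi = ∑ k, Real.exp (-βi * αi k))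
    (hZf : Zf = ∑ k, Real.exp (-βf * αf k))
    (ρi ρf : Matrix (Fin N) (Fin N) ℂ)
    (hρi : ρi = gibbs βi Hi) (hρf : ρf = gibbs βf Hf) :
    IsLeast {x : ℝ | ∃ V ∈ Matrix.unitaryGroup (Fin N) ℂ,
        x = ((ρf - V * ρi * star V) * Hf).trace.re}
      (∑ k, αf k * (Real.exp (-βf * αf k) / Zf - Real.exp (-βi * αi (k.rev)) / Zi)) := by
  obtain ⟨ei, hei⟩ := hαie
  obtain ⟨ef, hef⟩ := hαfe
  obtain ⟨P, hP, hHiP⟩ := hHi.exists_eq_conj_diagonal ei hei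
  obtain ⟨Q, hQ, hHfQ⟩ := hHf.exists_eq_conj_diagonal ef hef
  rw [hρi, hρf, hHiP, hHfQ, gibbs_conj_diagonal _ hP, gibbs_conj_diagonal _ hQ, ← hZi, ← hZf]
  have hZi_nonneg : 0 ≤ Zi := hZi ▸ Finset.sum_nonneg fun k _ => (Real.exp_pos _).le
  have hpi : Antitone fun k : Fin N => Real.exp (-βi * αi k.rev) / Zi := fun j k hjk =>
    div_le_div_of_nonneg_right
      (Real.exp_le_exp.2 (by nlinarith [hαi (Fin.rev_le_rev.2 hjk)])) hZi_nonneg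
  exact isLeast_re_trace_sub_conj_mul hP hQ _ _ αf Fin.revPerm (hαf.monovary hpi)

/-- minimum heat of a DUT+DTT process between Gibbs configurations. -/
theorem min_heat_DUT_DTT {N : ℕ}
    (Hi Hf : Matrix (Fin N) (Fin N) ℂ) (hHi : Hi.IsHermitian) (hHf : Hf.IsHermitian)
    (βi βf : ℝ) (hβi : 0 < βi) (hβf : 0 < βf)
    (αi αf : Fin N → ℝ) (hαi : Antitone αi) (hαf : Antitone αf)
    (hαie : ∃ e : Equiv.Perm (Fin N), ∀ k, αi k = hHi.eigenvalues (e k))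
    (hαfe : ∃ e : Equiv.Perm (Fin N), ∀ k, αf k = hHf.eigenvalues (e k))
    (Zi Zf : ℝ) (hZi : Zi = ∑ k, Real.exp (-βi * αi k))
    (hZf : Zf = ∑ k, Real.exp (-βf * αf k))
    (ρi ρf : Matrix (Fin N) (Fin N) ℂ)
    (hρi : ρi = gibbs βi Hi) (hρf : ρf = gibbs βf Hf) :
    IsLeast {x : ℝ | ∃ V ∈ Matrix.unitaryGroup (Fin N) ℂ,
        x = ((ρf - V * ρi * star V) * Hf).trace.re}
      (∑ k, αf k * (Real.exp (-βf * αf k) / Zf - Real.exp (-βi * αi (k.rev)) / Zi)) :=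
  min_heat_DUT_DTT_general Hi Hf hHi hHf βi βf hβi αi αf hαi hαf hαie hαfe Zi Zf hZi hZf ρi ρf hρi
    hρf
end

section
/- Let ρ̃_k ≠ ρ_{k+1} be positive-definite density matrices and p ∈ (0,1), and set ρ_m = p·ρ̃_k + (1−p)·ρ_{k+1}. Then −tr[(ρ_m − ρ̃_k) ln ρ_m] − tr[(ρ_{k+1} − ρ_m) ln ρ_{k+1}] + tr[(ρ_{k+1} − ρ̃_k) ln ρ_{k+1}] > 0; i.e., inserting the intermediate thermal configuration ρ_m strictly increases the discrete heat functional Λ. -/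
/-!
Since `ρk - ρm = (1 - p) (ρk - ρk1)` and `ρm - ρk1 = p (ρk - ρk1)`, the expression equals
`((1 - p) / p) tr[(ρm - ρk1)(ln ρm - ln ρk1)]`, a positive multiple of the symmetrised relative
entropy `S(ρm‖ρk1) + S(ρk1‖ρm)`. That this is positive for distinct positive definite matrices
`A`, `B` (Klein's inequality) is seen in their eigenbases `(uᵢ)`, `(vⱼ)`: with
`cᵢⱼ = |⟨uᵢ, vⱼ⟩|²`, `tr[(A - B)(ln A - ln B)] = ∑ᵢⱼ cᵢⱼ (aᵢ - bⱼ)(ln aᵢ - ln bⱼ)`. Every term is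
nonnegative because `ln` is increasing, and all of them vanish only if `(aᵢ - bⱼ) ⟨uᵢ, vⱼ⟩ = 0`
for all `i, j`, i.e. `A = B`.
-/

open Matrix BigOperators ComplexOrder

lemma Real.sub_mul_log_sub_log_pos {a b : ℝ} (ha : 0 < a) (hb : 0 < b) (hab : a ≠ b) :
    0 < (a - b) * (log a - log b) := by
  rcases hab.lt_or_gt with h | h
  · exact mul_pos_of_neg_of_neg (sub_neg.2 h) (sub_neg.2 (log_lt_log ha h))
  · exact mul_pos (sub_pos.2 h) (sub_pos.2 (log_lt_log hb h))

lemma Real.sub_mul_log_sub_log_nonneg {a b : ℝ} (ha : 0 < a) (hb : 0 < b) :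
    0 ≤ (a - b) * (log a - log b) := by
  rcases eq_or_ne a b with rfl | hab
  · simp
  · exact (sub_mul_log_sub_log_pos ha hb hab).le

namespace Matrix.IsHermitian

variable {n : Type*} [Fintype n] [DecidableEq n] {A B : Matrix n n ℂ}

lemma matFun_eq (hA : A.IsHermitian) (f : ℝ → ℝ) :
    matFun f A = (hA.eigenvectorUnitary : Matrix n n ℂ) *
      diagonal (fun i => (f (hA.eigenvalues i) : ℂ)) *
        star (hA.eigenvectorUnitary : Matrix n n ℂ) := by
  rw [matFun, dif_pos hA]

lemma matFun_id (hA : A.IsHermitian) : matFun id A = A := by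
  rw [hA.matFun_eq]
  exact hA.spectral_theorem.symm

lemma star_eigenvectorUnitary_mul_matFun (hA : A.IsHermitian) (f : ℝ → ℝ) :
    star (hA.eigenvectorUnitary : Matrix n n ℂ) * matFun f A =
      diagonal (fun i => (f (hA.eigenvalues i) : ℂ)) *
        star (hA.eigenvectorUnitary : Matrix n n ℂ) := by
  simp [hA.matFun_eq, ← Matrix.mul_assoc]

lemma matFun_mul_eigenvectorUnitary (hA : A.IsHermitian) (f : ℝ → ℝ) :
    matFun f A * (hA.eigenvectorUnitary : Matrix n n ℂ) =
      (hA.eigenvectorUnitary : Matrix n n ℂ) * diagonal (fun i => (f (hA.eigenvalues i) : ℂ)) := by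
  simp [hA.matFun_eq, Matrix.mul_assoc]

noncomputable def overlap (hA : A.IsHermitian) (hB : B.IsHermitian) : Matrix n n ℂ :=
  star (hA.eigenvectorUnitary : Matrix n n ℂ) * (hB.eigenvectorUnitary : Matrix n n ℂ)

lemma star_mul_sub_matFun_mul_apply (hA : A.IsHermitian) (hB : B.IsHermitian) (f : ℝ → ℝ)
    (i j : n) :
    (star (hA.eigenvectorUnitary : Matrix n n ℂ) * (matFun f A - matFun f B) *
        (hB.eigenvectorUnitary : Matrix n n ℂ)) i j =
      (f (hA.eigenvalues i) - f (hB.eigenvalues j) : ℝ) * overlap hA hB i j := by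
  rw [Matrix.mul_sub, Matrix.sub_mul, hA.star_eigenvectorUnitary_mul_matFun,
    Matrix.mul_assoc (star _) (matFun f B), hB.matFun_mul_eigenvectorUnitary, ← Matrix.mul_assoc,
    Matrix.mul_assoc (diagonal _), overlap]
  simp only [sub_apply, diagonal_mul, mul_diagonal]
  push_cast
  ring

lemma trace_sub_matFun_mul_sub_matFun (hA : A.IsHermitian) (hB : B.IsHermitian) (g f : ℝ → ℝ) :
    ((matFun g A - matFun g B) * (matFun f A - matFun f B)).trace =
      ((∑ i, ∑ j, (g (hA.eigenvalues i) - g (hB.eigenvalues j)) *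
        (f (hA.eigenvalues i) - f (hB.eigenvalues j)) *
          Complex.normSq (overlap hA hB i j) : ℝ) : ℂ) := by
  set U := (hA.eigenvectorUnitary : Matrix n n ℂ)
  set V := (hB.eigenvectorUnitary : Matrix n n ℂ)
  have hconj : ((matFun g A - matFun g B) * (matFun f A - matFun f B)).trace =
      ((star U * (matFun g A - matFun g B) * V) *
        (star V * (matFun f A - matFun f B) * U)).trace := by
    rw [show star U * (matFun g A - matFun g B) * V * (star V * (matFun f A - matFun f B) * U) =
        star U * ((matFun g A - matFun g B) * (matFun f A - matFun f B) * U) by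
      simp [V, Matrix.mul_assoc, ← Matrix.mul_assoc (V : Matrix n n ℂ) (star V)],
      trace_mul_comm (star U), Matrix.mul_assoc _ U,
      Unitary.mul_star_self_of_mem hA.eigenvectorUnitary.2, Matrix.mul_one]
  have hswap : ∀ i j, (star V * (matFun f A - matFun f B) * U) j i =
      (f (hA.eigenvalues i) - f (hB.eigenvalues j) : ℝ) * star (overlap hA hB i j) := by
    intro i j
    have hswap_overlap : overlap hB hA j i = star (overlap hA hB i j) := by
      rw [← star_apply, overlap, overlap, star_mul, star_star]
    rw [← neg_sub, Matrix.mul_neg, Matrix.neg_mul, neg_apply, star_mul_sub_matFun_mul_apply hB hA,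
      hswap_overlap]
    push_cast
    ring
  rw [hconj, trace]
  push_cast
  refine Finset.sum_congr rfl fun i _ => ?_
  rw [diag_apply, mul_apply]
  refine Finset.sum_congr rfl fun j _ => ?_
  rw [star_mul_sub_matFun_mul_apply, hswap, Complex.star_def, ← Complex.mul_conj]
  push_cast
  ring

lemma eq_of_forall_sub_mul_overlap_eq_zero (hA : A.IsHermitian) (hB : B.IsHermitian)
    (h : ∀ i j, (hA.eigenvalues i - hB.eigenvalues j : ℝ) * overlap hA hB i j = 0) : A = B := by
  have hconj : star (hA.eigenvectorUnitary : Matrix n n ℂ) * (A - B) *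
      (hB.eigenvectorUnitary : Matrix n n ℂ) = 0 := by
    ext i j
    simpa [hA.matFun_id, hB.matFun_id] using
      (hA.star_mul_sub_matFun_mul_apply hB id i j).trans (h i j)
  have := congrArg (fun X => (hA.eigenvectorUnitary : Matrix n n ℂ) * X *
    star (hB.eigenvectorUnitary : Matrix n n ℂ)) hconj
  simpa [Matrix.mul_assoc, ← Matrix.mul_assoc (hA.eigenvectorUnitary : Matrix n n ℂ),
    sub_eq_zero] using this

end Matrix.IsHermitian

namespace Matrix.PosDef

variable {n : Type*} [Fintype n] [DecidableEq n] {A B : Matrix n n ℂ}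

theorem re_trace_sub_mul_sub_matLog_pos (hA : A.PosDef) (hB : B.PosDef) (hne : A ≠ B) :
    0 < ((A - B) * (matLog A - matLog B)).trace.re := by
  have key := hA.1.trace_sub_matFun_mul_sub_matFun hB.1 id Real.log
  rw [hA.1.matFun_id, hB.1.matFun_id] at key
  rw [matLog, matLog, key, Complex.ofReal_re]
  set a := hA.1.eigenvalues
  set b := hB.1.eigenvalues
  set c := hA.1.overlap hB.1
  have hterm : ∀ i j, 0 ≤ (id (a i) - id (b j)) * (Real.log (a i) - Real.log (b j)) *
      Complex.normSq (c i j) := fun i j =>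
    mul_nonneg (Real.sub_mul_log_sub_log_nonneg (hA.eigenvalues_pos i) (hB.eigenvalues_pos j))
      (Complex.normSq_nonneg _)
  obtain ⟨i, j, hij⟩ : ∃ i j, (a i - b j : ℝ) * c i j ≠ 0 := by
    by_contra! h
    exact hne (hA.1.eq_of_forall_sub_mul_overlap_eq_zero hB.1 h)
  obtain ⟨hab, hc⟩ := mul_ne_zero_iff.1 hij
  refine Finset.sum_pos' (fun i _ => Finset.sum_nonneg fun j _ => hterm i j)
    ⟨i, Finset.mem_univ i, Finset.sum_pos' (fun j _ => hterm i j) ⟨j, Finset.mem_univ j, ?_⟩⟩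
  exact mul_pos (Real.sub_mul_log_sub_log_pos (hA.eigenvalues_pos i) (hB.eigenvalues_pos j)
    (sub_ne_zero.1 (by exact_mod_cast hab))) (Complex.normSq_pos.2 hc)

end Matrix.PosDef

theorem augmentation_strict_increase_general {n : Type*} [Fintype n] [DecidableEq n]
    (ρk ρk1 : Matrix n n ℂ)
    (hkpd : ρk.PosDef) (hk1pd : ρk1.PosDef) (hne : ρk ≠ ρk1)
    (p : ℝ) (hp : p ∈ Set.Ioo (0:ℝ) 1)
    (ρm : Matrix n n ℂ) (hm : ρm = p • ρk + (1 - p) • ρk1) :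
    0 < -(((ρm - ρk) * matLog ρm).trace.re) - (((ρk1 - ρm) * matLog ρk1).trace.re)
        + (((ρk1 - ρk) * matLog ρk1).trace.re) := by
  obtain ⟨hp0, hp1⟩ := hp
  have hmpd : ρm.PosDef := hm ▸ (hkpd.smul hp0).add (hk1pd.smul (sub_pos.2 hp1))
  have hm_sub : ρm - ρk1 = p • (ρk - ρk1) := by rw [hm]; module
  have hk_sub : ρk - ρm = (1 - p) • (ρk - ρk1) := by rw [hm]; module
  have hmne : ρm ≠ ρk1 := by
    rw [← sub_ne_zero, hm_sub]
    exact smul_ne_zero hp0.ne' (sub_ne_zero.2 hne)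
  have hcollapse : -(((ρm - ρk) * matLog ρm).trace.re) - (((ρk1 - ρm) * matLog ρk1).trace.re)
      + (((ρk1 - ρk) * matLog ρk1).trace.re) =
      ((ρk - ρm) * (matLog ρm - matLog ρk1)).trace.re := by
    have hexpand : (ρk - ρm) * (matLog ρm - matLog ρk1) = ((ρk1 - ρk) * matLog ρk1 -
        (ρk1 - ρm) * matLog ρk1) - (ρm - ρk) * matLog ρm := by noncomm_ring
    rw [hexpand, trace_sub, trace_sub, Complex.sub_re, Complex.sub_re]
    ring
  have hklein := hmpd.re_trace_sub_mul_sub_matLog_pos hk1pd hmne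
  rw [hm_sub, smul_mul, trace_smul, Complex.smul_re, smul_eq_mul] at hklein
  rw [hcollapse, hk_sub, smul_mul, trace_smul, Complex.smul_re, smul_eq_mul]
  exact mul_pos (sub_pos.2 hp1) (pos_of_mul_pos_right hklein hp0.le)

/-- inserting an intermediate thermal configuration strictly increases Λ. -/
theorem augmentation_strict_increase {n : Type*} [Fintype n] [DecidableEq n]
    (ρk ρk1 : Matrix n n ℂ) (hk : IsDensity ρk) (hk1 : IsDensity ρk1)
    (hkpd : ρk.PosDef) (hk1pd : ρk1.PosDef) (hne : ρk ≠ ρk1)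
    (p : ℝ) (hp : p ∈ Set.Ioo (0:ℝ) 1)
    (ρm : Matrix n n ℂ) (hm : ρm = p • ρk + (1 - p) • ρk1) :
    0 < -(((ρm - ρk) * matLog ρm).trace.re) - (((ρk1 - ρm) * matLog ρk1).trace.re)
        + (((ρk1 - ρk) * matLog ρk1).trace.re) :=
  augmentation_strict_increase_general ρk ρk1 hkpd hk1pd hne p hp ρm hm
end

section
/- Let ρ_k and ρ_{k+1} be positive-definite density matrices, and for n ≥ 1 define interpolated states ρ'_ℓ = (1 − ℓ/n)ρ_k + (ℓ/n)ρ_{k+1} for ℓ = 0,…,n. Then Λ_n := Σ_{ℓ=0}^{n−1} tr[(ρ'_ℓ − ρ'_{ℓ+1}) ln ρ'_{ℓ+1}] satisfies ΔS − (S(ρ_{k+1}‖ρ_k) + S(ρ_k‖ρ_{k+1}))/n ≤ Λ_n ≤ ΔS, where ΔS = S(ρ_{k+1}) − S(ρ_k). -/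
open Matrix BigOperators ComplexOrder

/-!
Writing `E(σ) = tr[σ ln σ]`, each summand of `Λ_n` equals
`E(ρ'_ℓ) - E(ρ'_{ℓ+1}) - S(ρ'_ℓ‖ρ'_{ℓ+1})`, so `Λ_n = ΔS - ∑ₗ S(ρ'_ℓ‖ρ'_{ℓ+1})` and Klein's
inequality gives the upper bound. For the lower bound, each relative entropy is at most its
symmetrisation `S(a‖b) + S(b‖a) = tr[(a - b)(ln a - ln b)]`; along the interpolation `a - b` is
always `(ρ_k - ρ_{k+1})/n`, so the symmetrised sum telescopes to
`(S(ρ_{k+1}‖ρ_k) + S(ρ_k‖ρ_{k+1}))/n`.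

Klein's inequality is proved in the eigenbases `(uᵢ)` of `ρ` and `(vⱼ)` of `σ`:
`tr[ρ ln ρ - ρ ln σ] - tr[ρ - σ] = ∑ᵢⱼ |⟨uᵢ, vⱼ⟩|² (pᵢ ln pᵢ - pᵢ ln qⱼ - pᵢ + qⱼ)`, because the
matrix `|⟨uᵢ, vⱼ⟩|²` is doubly stochastic, and every term is nonnegative since `ln x ≤ x - 1`.
-/

lemma Real.sub_le_mul_log_sub_log {p q : ℝ} (hp : 0 ≤ p) (hq : 0 < q) :
    p - q ≤ p * (Real.log p - Real.log q) := by
  rcases hp.eq_or_lt with rfl | hp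
  · simpa using hq.le
  have hlog := Real.log_le_sub_one_of_pos (div_pos hq hp)
  rw [Real.log_div hq.ne' hp.ne'] at hlog
  have hmul := mul_le_mul_of_nonneg_left hlog hp.le
  have hq' : p * (q / p - 1) = q - p := by field_simp
  linarith

lemma Matrix.PosDef.one_sub_smul_add_smul {n : Type*} {A B : Matrix n n ℂ} (hA : A.PosDef)
    (hB : B.PosDef) {t : ℝ} (h0 : 0 ≤ t) (h1 : t ≤ 1) : ((1 - t) • A + t • B).PosDef := by
  rcases h1.eq_or_lt with rfl | h1
  · simpa using hB
  · exact (hA.smul (sub_pos.mpr h1)).add_posSemidef (hB.posSemidef.smul h0)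

section

variable {n : Type*} [Fintype n] [DecidableEq n]

namespace Matrix

lemma sum_normSq_row_of_mem_unitaryGroup {W : Matrix n n ℂ} (hW : W ∈ unitaryGroup n ℂ)
    (i : n) : ∑ j, Complex.normSq (W i j) = 1 := by
  have h := congrFun (congrFun (mem_unitaryGroup_iff.mp hW) i) i
  simp only [mul_apply, star_apply, one_apply_eq, Complex.star_def, Complex.mul_conj] at h
  exact_mod_cast h

lemma sum_normSq_col_of_mem_unitaryGroup {W : Matrix n n ℂ} (hW : W ∈ unitaryGroup n ℂ)
    (j : n) : ∑ i, Complex.normSq (W i j) = 1 := by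
  simpa [star_apply] using sum_normSq_row_of_mem_unitaryGroup (Unitary.star_mem hW) j

namespace IsHermitian

variable {A B : Matrix n n ℂ} (hA : A.IsHermitian) (hB : B.IsHermitian)

/-- `|⟨uᵢ, vⱼ⟩|²` for the eigenbases `(uᵢ)` of `A` and `(vⱼ)` of `B`. -/
noncomputable def eigenOverlap (i j : n) : ℝ :=
  Complex.normSq ((star (hA.eigenvectorUnitary : Matrix n n ℂ) * hB.eigenvectorUnitary) i j)

lemma star_eigenvectorUnitary_mul_mem_unitaryGroup :
    star (hA.eigenvectorUnitary : Matrix n n ℂ) * hB.eigenvectorUnitary ∈ unitaryGroup n ℂ :=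
  mul_mem (Unitary.star_mem hA.eigenvectorUnitary.2) hB.eigenvectorUnitary.2

lemma sum_eigenOverlap_right (i : n) : ∑ j, hA.eigenOverlap hB i j = 1 :=
  sum_normSq_row_of_mem_unitaryGroup (hA.star_eigenvectorUnitary_mul_mem_unitaryGroup hB) i

lemma sum_eigenOverlap_left (j : n) : ∑ i, hA.eigenOverlap hB i j = 1 :=
  sum_normSq_col_of_mem_unitaryGroup (hA.star_eigenvectorUnitary_mul_mem_unitaryGroup hB) j

lemma eigenOverlap_self : hA.eigenOverlap hA = fun i j => if i = j then 1 else 0 := by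
  ext i j
  rw [eigenOverlap, mem_unitaryGroup_iff'.mp hA.eigenvectorUnitary.2, one_apply]
  split_ifs <;> simp

end IsHermitian

end Matrix

lemma matFun_of_isHermitian (f : ℝ → ℝ) {A : Matrix n n ℂ} (hA : A.IsHermitian) :
    matFun f A = (hA.eigenvectorUnitary : Matrix n n ℂ) *
      diagonal (fun i => (f (hA.eigenvalues i) : ℂ)) *
        star (hA.eigenvectorUnitary : Matrix n n ℂ) :=
  dif_pos hA

lemma re_trace_diagonal_mul_mul_diagonal_mul_star (a b : n → ℝ) (W : Matrix n n ℂ) :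
    (diagonal (fun i => (a i : ℂ)) * (W * diagonal (fun j => (b j : ℂ)) * star W)).trace.re =
      ∑ i, ∑ j, a i * Complex.normSq (W i j) * b j := by
  have hdiag : ∀ i, (W * diagonal (fun j => (b j : ℂ)) * star W) i i =
      ∑ j, (Complex.normSq (W i j) * b j : ℝ) := fun i => by
    rw [mul_apply]
    simp only [mul_diagonal, star_apply, Complex.star_def]
    push_cast
    refine Finset.sum_congr rfl fun j _ => ?_
    rw [← Complex.mul_conj]
    ring
  have htrace :
      (diagonal (fun i => (a i : ℂ)) * (W * diagonal (fun j => (b j : ℂ)) * star W)).trace =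
        ((∑ i, a i * ∑ j, Complex.normSq (W i j) * b j : ℝ) : ℂ) := by
    simp only [trace, diag_apply, diagonal_mul, hdiag]
    push_cast
    rfl
  rw [htrace, Complex.ofReal_re]
  simp only [Finset.mul_sum, mul_assoc]

lemma re_trace_mul_matFun {A B : Matrix n n ℂ} (hA : A.IsHermitian) (hB : B.IsHermitian)
    (f : ℝ → ℝ) : (A * matFun f B).trace.re =
      ∑ i, ∑ j, hA.eigenvalues i * hA.eigenOverlap hB i j * f (hB.eigenvalues j) := by
  set U := (hA.eigenvectorUnitary : Matrix n n ℂ)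
  set V := (hB.eigenvectorUnitary : Matrix n n ℂ)
  set Da := diagonal (fun i => (hA.eigenvalues i : ℂ))
  have hA_eq : A = U * Da * star U := by
    conv_lhs => rw [hA.spectral_theorem]
    rfl
  have hcycle : (A * matFun f B).trace = (Da * ((star U * V) *
      diagonal (fun j => (f (hB.eigenvalues j) : ℂ)) * star (star U * V))).trace := by
    rw [matFun_of_isHermitian f hB, hA_eq, star_mul, star_star]
    simp only [Matrix.mul_assoc]
    rw [trace_mul_comm U]
    simp only [Matrix.mul_assoc]
    rfl
  rw [hcycle, re_trace_diagonal_mul_mul_diagonal_mul_star]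
  rfl

theorem relEnt_nonneg {ρ σ : Matrix n n ℂ} (hρ : ρ.PosSemidef) (hσ : σ.PosDef)
    (htr : ρ.trace = σ.trace) : 0 ≤ relEnt ρ σ := by
  simpa [htr] using re_trace_sub_le_relEnt hρ hσ

lemma re_trace_sub_mul_matLog (a b : Matrix n n ℂ) :
    ((a - b) * matLog b).trace.re = vnEntropy b - vnEntropy a - relEnt a b := by
  simp only [vnEntropy, relEnt, Matrix.sub_mul, Matrix.trace_sub, Complex.sub_re]
  ring

lemma relEnt_add_relEnt (a b : Matrix n n ℂ) :
    relEnt a b + relEnt b a = ((a - b) * (matLog a - matLog b)).trace.re := by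
  simp only [relEnt, Matrix.sub_mul, Matrix.mul_sub, Matrix.trace_sub, Complex.sub_re]
  ring

noncomputable def heatFunctional (ρ : ℕ → Matrix n n ℂ) (m : ℕ) : ℝ :=
  ∑ ℓ ∈ Finset.range m, ((ρ ℓ - ρ (ℓ + 1)) * matLog (ρ (ℓ + 1))).trace.re

lemma heatFunctional_eq (ρ : ℕ → Matrix n n ℂ) (m : ℕ) :
    heatFunctional ρ m =
      vnEntropy (ρ m) - vnEntropy (ρ 0) - ∑ ℓ ∈ Finset.range m, relEnt (ρ ℓ) (ρ (ℓ + 1)) := by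
  simp only [heatFunctional, re_trace_sub_mul_matLog, Finset.sum_sub_distrib,
    Finset.sum_range_sub (fun ℓ => vnEntropy (ρ ℓ))]

theorem heatFunctional_le {ρ : ℕ → Matrix n n ℂ} {m : ℕ} (hpd : ∀ ℓ ≤ m, (ρ ℓ).PosDef)
    (htr : ∀ ℓ < m, (ρ ℓ).trace = (ρ (ℓ + 1)).trace) :
    heatFunctional ρ m ≤ vnEntropy (ρ m) - vnEntropy (ρ 0) := by
  have hrel : 0 ≤ ∑ ℓ ∈ Finset.range m, relEnt (ρ ℓ) (ρ (ℓ + 1)) :=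
    Finset.sum_nonneg fun ℓ hℓ => have hℓm := Finset.mem_range.mp hℓ
      relEnt_nonneg (hpd ℓ hℓm.le).posSemidef (hpd (ℓ + 1) hℓm) (htr ℓ hℓm)
  linarith [heatFunctional_eq ρ m]

theorem le_heatFunctional_of_sub_eq {ρ : ℕ → Matrix n n ℂ} {D : Matrix n n ℂ} {m : ℕ}
    (hpd : ∀ ℓ ≤ m, (ρ ℓ).PosDef) (hstep : ∀ ℓ, ρ ℓ - ρ (ℓ + 1) = D) (hD : D.trace = 0) :
    vnEntropy (ρ m) - vnEntropy (ρ 0) - (D * (matLog (ρ 0) - matLog (ρ m))).trace.re ≤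
      heatFunctional ρ m := by
  have htr : ∀ ℓ, (ρ (ℓ + 1)).trace = (ρ ℓ).trace := fun ℓ => by
    rw [← sub_eq_zero, ← trace_sub, ← neg_sub, hstep, trace_neg, hD, neg_zero]
  have hsym : ∑ ℓ ∈ Finset.range m, (relEnt (ρ ℓ) (ρ (ℓ + 1)) + relEnt (ρ (ℓ + 1)) (ρ ℓ)) =
      (D * (matLog (ρ 0) - matLog (ρ m))).trace.re := by
    simp only [relEnt_add_relEnt, hstep, Matrix.mul_sub, Matrix.trace_sub, Complex.sub_re]
    exact Finset.sum_range_sub' (fun ℓ => (D * matLog (ρ ℓ)).trace.re) m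
  have hle : ∑ ℓ ∈ Finset.range m, relEnt (ρ ℓ) (ρ (ℓ + 1)) ≤
      ∑ ℓ ∈ Finset.range m, (relEnt (ρ ℓ) (ρ (ℓ + 1)) + relEnt (ρ (ℓ + 1)) (ρ ℓ)) :=
    Finset.sum_le_sum fun ℓ hℓ => have hℓm := Finset.mem_range.mp hℓ
      le_add_of_nonneg_right <|
        relEnt_nonneg (hpd (ℓ + 1) hℓm).posSemidef (hpd ℓ hℓm.le) (htr ℓ)
  linarith [heatFunctional_eq ρ m]

end

/-- two-sided bound on the discrete heat functional of the
interpolated trajectory. -/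
theorem interpolated_Lambda_bounds {n : Type*} [Fintype n] [DecidableEq n]
    (ρk ρk1 : Matrix n n ℂ) (hk : IsDensity ρk) (hk1 : IsDensity ρk1)
    (hkpd : ρk.PosDef) (hk1pd : ρk1.PosDef)
    (m : ℕ) (hm : 1 ≤ m)
    (ρ' : ℕ → Matrix n n ℂ)
    (hρ' : ∀ ℓ, ρ' ℓ = (1 - (ℓ : ℝ) / m) • ρk + ((ℓ : ℝ) / m) • ρk1) :
    vnEntropy ρk1 - vnEntropy ρk - (relEnt ρk1 ρk + relEnt ρk ρk1) / m ≤
        (∑ ℓ ∈ Finset.range m, ((ρ' ℓ - ρ' (ℓ + 1)) * matLog (ρ' (ℓ + 1))).trace.re) ∧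
      (∑ ℓ ∈ Finset.range m, ((ρ' ℓ - ρ' (ℓ + 1)) * matLog (ρ' (ℓ + 1))).trace.re) ≤
        vnEntropy ρk1 - vnEntropy ρk := by
  have hm0 : (m : ℝ) ≠ 0 := Nat.cast_ne_zero.mpr (by omega)
  have hρ0 : ρ' 0 = ρk := by simp [hρ']
  have hρm : ρ' m = ρk1 := by simp [hρ', hm0]
  have hstep : ∀ ℓ, ρ' ℓ - ρ' (ℓ + 1) = (m : ℝ)⁻¹ • (ρk - ρk1) := fun ℓ => by
    rw [hρ', hρ']; push_cast; module
  have hD : ((m : ℝ)⁻¹ • (ρk - ρk1)).trace = 0 := by simp [trace_sub, hk.2, hk1.2]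
  have hpd : ∀ ℓ ≤ m, (ρ' ℓ).PosDef := fun ℓ hℓ => hρ' ℓ ▸
    hkpd.one_sub_smul_add_smul hk1pd (by positivity)
      (div_le_one_of_le₀ (by exact_mod_cast hℓ) (Nat.cast_nonneg m))
  have hsym : ((m : ℝ)⁻¹ • (ρk - ρk1) * (matLog ρk - matLog ρk1)).trace.re =
      (relEnt ρk1 ρk + relEnt ρk ρk1) / m := by
    rw [Matrix.smul_mul, trace_smul, Complex.smul_re, ← relEnt_add_relEnt, smul_eq_mul]
    ring
  have hlower := le_heatFunctional_of_sub_eq hpd hstep hD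
  have hupper := heatFunctional_le hpd fun ℓ _ => by
    rw [← sub_eq_zero, ← trace_sub, hstep, hD]
  rw [hρ0, hρm, hsym] at hlower
  rw [hρ0, hρm] at hupper
  exact ⟨hlower, hupper⟩
end
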